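/- The determinant map det : N(V) → N(det V), sending a norm to its induced determinant norm, is N-Lipschitz with respect to the Goldman–Iwahori metrics, where N = dim V. -/

import Mathlib

def IsVNorm (K : Type*) [NormedField K] {V : Type*} [AddCommGroup V] [Module K V]
    (f : V → ℝ) : Prop :=
  (∀ v, 0 ≤ f v) ∧ (∀ (a : K) (v : V), f (a • v) = ‖a‖ * f v) ∧
    (∀ v w, f (v + w) ≤ f v + f w) ∧ ∀ v, f v = 0 → v = 0

noncomputable def dGI {V : Type*} [AddCommGroup V] (f g : V → ℝ) : ℝ :=
  ⨆ v : {v : V // v ≠ 0}, |Real.log (f v) - Real.log (g v)|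

noncomputable def detNorm (K : Type*) {V : Type*} [NormedField K] [AddCommGroup V]
    [Module K V] (N : ℕ) (f : V → ℝ) (τ : ExteriorAlgebra K V) : ℝ :=
  sInf {x : ℝ | ∃ v : Fin N → V, ExteriorAlgebra.ιMulti K N v = τ ∧ x = ∏ i, f (v i)}

section Aux
variable {K : Type*} [NormedField K] {V : Type*} [AddCommGroup V] [Module K V]

theorem IsVNorm.zero {f : V → ℝ} (hf : IsVNorm K f) : f 0 = 0 := by
  simpa using hf.2.1 (0 : K) 0

theorem IsVNorm.pos {f : V → ℝ} (hf : IsVNorm K f) {v : V} (hv : v ≠ 0) : 0 < f v :=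
  lt_of_le_of_ne (hf.1 v) fun h => hv (hf.2.2.2 v h.symm)

theorem IsVNorm.neg {f : V → ℝ} (hf : IsVNorm K f) (v : V) : f (-v) = f v := by
  have := hf.2.1 (-1 : K) v
  simpa using this

theorem IsVNorm.sum_le {f : V → ℝ} (hf : IsVNorm K f) {ι : Type*} (s : Finset ι) (u : ι → V) :
    f (∑ i ∈ s, u i) ≤ ∑ i ∈ s, f (u i) := by
  classical
  induction s using Finset.cons_induction with
  | empty => simp [hf.zero (K := K)]
  | cons a s ha ih =>
    rw [Finset.sum_cons, Finset.sum_cons]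
    exact le_trans (hf.2.2.1 _ _) (by linarith)

/-- In the trivially-valued case, every vector-space norm is bounded below on nonzero
vectors. -/
theorem IsVNorm.exists_pos_le [FiniteDimensional K V] (htriv : ∀ a : K, ‖a‖ ≤ 1)
    {f : V → ℝ} (hf : IsVNorm K f) : ∃ c > 0, ∀ v : V, v ≠ 0 → c ≤ f v := by
  classical
  by_contra h
  push_neg at h
  set n := Module.finrank K V with hn
  -- the spans of small vectors
  set S : ℕ → Submodule K V := fun k => Submodule.span K {v : V | f v < 1 / (k + 1)} with hS
  have hmono : ∀ k m : ℕ, k ≤ m → S m ≤ S k := by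
    intro k m hkm
    apply Submodule.span_mono
    intro v hv
    simp only [Set.mem_setOf_eq] at hv ⊢
    refine lt_of_lt_of_le hv ?_
    apply one_div_le_one_div_of_le
    · positivity
    · have : (k : ℝ) ≤ m := Nat.cast_le.2 hkm
      linarith
  obtain ⟨M, hM⟩ := IsArtinian.monotone_stabilizes
    (⟨fun k => OrderDual.toDual (S k), fun _ _ hkm => hmono _ _ hkm⟩ : ℕ →o (Submodule K V)ᵒᵈ)
  -- a nonzero small vector in the stable span
  obtain ⟨u, hu0, huf⟩ := h (1 / (M + 1)) (by positivity)
  have hfu : 0 < f u := hf.pos hu0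
  have huS : u ∈ S M := Submodule.subset_span huf
  -- choose a scale
  obtain ⟨k, hk⟩ := exists_nat_one_div_lt (show (0:ℝ) < f u / (n + 1) by positivity)
  set k' := max k M with hk'
  have hδ : (1 : ℝ) / (k' + 1) < f u / (n + 1) := by
    refine lt_of_le_of_lt ?_ hk
    apply one_div_le_one_div_of_le
    · positivity
    · have : (k : ℝ) ≤ k' := Nat.cast_le.2 (le_max_left _ _)
      linarith
  have huS' : u ∈ S k' := by
    have := hM k' (le_max_right _ _)
    have heq : S M = S k' := congrArg OrderDual.ofDual this
    rw [← heq]; exact huS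
  -- extract a linearly independent spanning subset
  obtain ⟨b, hbsub, hbspan, hbli⟩ :=
    exists_linearIndependent K {v : V | f v < 1 / (k' + 1)}
  rw [hS] at huS'
  have hub : u ∈ Submodule.span K b := by rw [hbspan]; exact huS'
  have hbfin : b.Finite := hbli.set_finite_of_isNoetherian
  set t := hbfin.toFinset with ht
  have htb : (t : Set V) = b := hbfin.coe_toFinset
  have hut : u ∈ Submodule.span K (t : Set V) := by rw [htb]; exact hub
  obtain ⟨c, -, hc⟩ := Submodule.mem_span_finset.1 hut
  -- bound the cardinality
  have hcard : t.card ≤ n := by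
    apply LinearIndependent.finset_card_le_finrank
    exact LinearIndepOn.mono (v := id) hbli (by intro x hx; rw [← htb]; simpa using hx)
  -- bound f u
  have hbound : f u ≤ t.card * (1 / ((k' : ℝ) + 1)) := by
    calc f u = f (∑ i ∈ t, c i • i) := by rw [hc]
      _ ≤ ∑ i ∈ t, f (c i • i) := hf.sum_le t _
      _ ≤ ∑ i ∈ t, (1 / ((k' : ℝ) + 1)) := by
          apply Finset.sum_le_sum
          intro i hi
          rw [hf.2.1]
          have hib : i ∈ b := by rw [← htb]; exact_mod_cast hi
          have hifv : f i < 1 / (k' + 1) := hbsub hib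
          calc ‖c i‖ * f i ≤ 1 * f i :=
              mul_le_mul_of_nonneg_right (htriv _) (hf.1 i)
            _ = f i := one_mul _
            _ ≤ 1 / ((k' : ℝ) + 1) := le_of_lt hifv
      _ = t.card * (1 / ((k' : ℝ) + 1)) := by rw [Finset.sum_const, nsmul_eq_mul]
  have hcard' : (t.card : ℝ) ≤ n := Nat.cast_le.2 hcard
  have h1 : f u ≤ n * (1 / (k' + 1)) := by
    refine le_trans hbound ?_
    apply mul_le_mul_of_nonneg_right hcard' (by positivity)
  have h2 : (n : ℝ) * (1 / (k' + 1)) ≤ n * (f u / (n + 1)) :=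
    mul_le_mul_of_nonneg_left (le_of_lt hδ) (by positivity)
  have h3 : (n : ℝ) * (f u / (n + 1)) < f u := by
    rw [mul_div_assoc']
    rw [div_lt_iff₀ (by positivity)]
    nlinarith [hfu]
  linarith

/-- package a vector-space norm as an `AddGroupNorm` -/
def IsVNorm.toAddGroupNorm {f : V → ℝ} (hf : IsVNorm K f) : AddGroupNorm V where
  toFun := f
  map_zero' := hf.zero
  add_le' := hf.2.2.1
  neg' := hf.neg
  eq_zero_of_map_eq_zero' := hf.2.2.2

end Aux

/-- type copy to host a second norm -/
def NormCopy (V : Type*) := V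

instance {V : Type*} [AddCommGroup V] : AddCommGroup (NormCopy V) :=
  inferInstanceAs (AddCommGroup V)

instance {K V : Type*} [Semiring K] [AddCommGroup V] [Module K V] : Module K (NormCopy V) :=
  inferInstanceAs (Module K V)

/-- identity as a linear map from the copy -/
def NormCopy.linearMap (K V : Type*) [Semiring K] [AddCommGroup V] [Module K V] :
    NormCopy V →ₗ[K] V where
  toFun := fun v => v
  map_add' := fun _ _ => rfl
  map_smul' := fun _ _ => rfl

section Aux2
variable {K : Type*} [NormedField K] {V : Type*} [AddCommGroup V] [Module K V]

/-- Equivalence of norms over a complete valued field, one direction. -/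
theorem IsVNorm.exists_bound [CompleteSpace K] [FiniteDimensional K V]
    (f g : V → ℝ) (hf : IsVNorm K f) (hg : IsVNorm K g) :
    ∃ C > 0, ∀ v, f v ≤ C * g v := by
  by_cases hK : ∃ a : K, 1 < ‖a‖
  · -- nontrivially valued: use mathlib's finite-dimensional theory
    let nG : AddGroupNorm (NormCopy V) := IsVNorm.toAddGroupNorm (V := NormCopy V) hg
    letI : NontriviallyNormedField K := { toNormedField := ‹_›, non_trivial := hK }
    letI : NormedAddCommGroup V := hf.toAddGroupNorm.toNormedAddCommGroup
    letI : NormedSpace K V := ⟨fun a v => le_of_eq (hf.2.1 a v)⟩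
    letI : NormedAddCommGroup (NormCopy V) :=
      nG.toNormedAddCommGroup
    letI : NormedSpace K (NormCopy V) := ⟨fun a v => le_of_eq (hg.2.1 a v)⟩
    haveI : FiniteDimensional K (NormCopy V) := ‹FiniteDimensional K V›
    let T : (NormCopy V) →L[K] V := LinearMap.toContinuousLinearMap (NormCopy.linearMap K V)
    refine ⟨max ‖T‖ 1, lt_of_lt_of_le one_pos (le_max_right _ _), fun v => ?_⟩
    have h1 : f v ≤ ‖T‖ * g v := T.le_opNorm v
    calc f v ≤ ‖T‖ * g v := h1
      _ ≤ max ‖T‖ 1 * g v :=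
        mul_le_mul_of_nonneg_right (le_max_left _ _) (hg.1 v)
  · -- trivially valued case
    push_neg at hK
    obtain ⟨c, hc, hcle⟩ := hg.exists_pos_le hK
    -- f is bounded above using a basis
    set b := Module.finBasis K V with hb
    set C0 := ∑ i, f (b i) with hC0
    have hC0nonneg : 0 ≤ C0 := Finset.sum_nonneg fun i _ => hf.1 _
    have hfub : ∀ v : V, f v ≤ C0 := by
      intro v
      calc f v = f (∑ i, b.repr v i • b i) := by rw [b.sum_repr]
        _ ≤ ∑ i, f (b.repr v i • b i) := hf.sum_le _ _
        _ ≤ ∑ i, f (b i) := by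
            apply Finset.sum_le_sum
            intro i _
            rw [hf.2.1]
            calc ‖b.repr v i‖ * f (b i) ≤ 1 * f (b i) :=
                mul_le_mul_of_nonneg_right (hK _) (hf.1 _)
              _ = f (b i) := one_mul _
    refine ⟨(C0 + 1) / c, by positivity, fun v => ?_⟩
    by_cases hv : v = 0
    · subst hv
      simp [hf.zero (K := K), hg.zero (K := K)]
    · rw [div_mul_eq_mul_div, le_div_iff₀ hc]
      nlinarith [hfub v, hcle v hv, hf.1 v, hg.1 v, hC0nonneg, hc]
end Aux2

/-- The determinant map `N(V) → N(det V)` is `N`-Lipschitz for the Goldman–Iwahori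
metrics: since `det V` is a line, this says that for every nonzero `τ` in the top
exterior power, `|log det‖τ‖ − log det‖τ‖'| ≤ N · d_GI(‖·‖, ‖·‖')`. -/
theorem detNorm_lipschitz
    {K V : Type*} [NormedField K] [CompleteSpace K]
    [AddCommGroup V] [Module K V] [FiniteDimensional K V] {N : ℕ}
    (hdim : Module.finrank K V = N)
    (f g : V → ℝ) (hf : IsVNorm K f) (hg : IsVNorm K g)
    (τ : ExteriorAlgebra K V) (hτmem : τ ∈ ⋀[K]^N V) (hτ : τ ≠ 0) :
    |Real.log (detNorm K N f τ) - Real.log (detNorm K N g τ)| ≤ N * dGI f g := by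
  classical
  obtain ⟨C₁, hC₁, h₁⟩ := IsVNorm.exists_bound f g hf hg
  obtain ⟨C₂, hC₂, h₂⟩ := IsVNorm.exists_bound g f hg hf
  set d := dGI f g with hd
  have hd0 : 0 ≤ d := Real.iSup_nonneg fun v => abs_nonneg _
  -- boundedness of the GI distance
  have hbdd : BddAbove (Set.range fun v : {v : V // v ≠ 0} =>
      |Real.log (f v) - Real.log (g v)|) := by
    refine ⟨max |Real.log C₁| |Real.log C₂|, ?_⟩
    rintro x ⟨⟨v, hv⟩, rfl⟩
    have hfv : 0 < f v := hf.pos hv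
    have hgv : 0 < g v := hg.pos hv
    have e1 : Real.log (f v) ≤ Real.log C₁ + Real.log (g v) := by
      rw [← Real.log_mul (ne_of_gt hC₁) (ne_of_gt hgv)]
      exact Real.log_le_log hfv (h₁ v)
    have e2 : Real.log (g v) ≤ Real.log C₂ + Real.log (f v) := by
      rw [← Real.log_mul (ne_of_gt hC₂) (ne_of_gt hfv)]
      exact Real.log_le_log hgv (h₂ v)
    have m1 : Real.log C₁ ≤ max |Real.log C₁| |Real.log C₂| :=
      le_trans (le_abs_self _) (le_max_left _ _)
    have m2 : Real.log C₂ ≤ max |Real.log C₁| |Real.log C₂| :=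
      le_trans (le_abs_self _) (le_max_right _ _)
    rw [abs_le]
    constructor <;> [skip; skip] <;> simp only [] <;> linarith
  have hle : ∀ v : V, v ≠ 0 → |Real.log (f v) - Real.log (g v)| ≤ d :=
    fun v hv => le_ciSup hbdd (⟨v, hv⟩ : {v : V // v ≠ 0})
  -- pointwise comparison
  have key : ∀ v : V, f v ≤ Real.exp d * g v := by
    intro v
    by_cases hv : v = 0
    · subst hv
      rw [hf.zero (K := K), hg.zero (K := K), mul_zero]
    · have hfv : 0 < f v := hf.pos hv
      have hgv : 0 < g v := hg.pos hv
      have h5 : Real.log (f v) - Real.log (g v) ≤ d :=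
        le_trans (le_abs_self _) (hle v hv)
      calc f v = Real.exp (Real.log (f v)) := (Real.exp_log hfv).symm
        _ ≤ Real.exp (d + Real.log (g v)) := Real.exp_le_exp.2 (by linarith)
        _ = Real.exp d * g v := by rw [Real.exp_add, Real.exp_log hgv]
  have key' : ∀ v : V, g v ≤ Real.exp d * f v := by
    intro v
    by_cases hv : v = 0
    · subst hv
      rw [hf.zero (K := K), hg.zero (K := K), mul_zero]
    · have hfv : 0 < f v := hf.pos hv
      have hgv : 0 < g v := hg.pos hv
      have h5 : -(d) ≤ Real.log (f v) - Real.log (g v) := neg_le_of_abs_le (hle v hv)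
      calc g v = Real.exp (Real.log (g v)) := (Real.exp_log hgv).symm
        _ ≤ Real.exp (d + Real.log (f v)) := Real.exp_le_exp.2 (by linarith)
        _ = Real.exp d * f v := by rw [Real.exp_add, Real.exp_log hfv]
  -- the determinant norms
  unfold detNorm
  set Sf := {x : ℝ | ∃ v : Fin N → V, ExteriorAlgebra.ιMulti K N v = τ ∧ x = ∏ i, f (v i)}
    with hSf
  set Sg := {x : ℝ | ∃ v : Fin N → V, ExteriorAlgebra.ιMulti K N v = τ ∧ x = ∏ i, g (v i)}
    with hSg
  have hNd0 : (0:ℝ) ≤ N * d := by positivity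
  by_cases hne : ∃ v : Fin N → V, ExteriorAlgebra.ιMulti K N v = τ
  · obtain ⟨w, hw⟩ := hne
    have hSfne : Sf.Nonempty := ⟨∏ i, f (w i), w, hw, rfl⟩
    have hSgne : Sg.Nonempty := ⟨∏ i, g (w i), w, hw, rfl⟩
    have hSfbd : BddBelow Sf := by
      refine ⟨0, ?_⟩
      rintro x ⟨v, -, rfl⟩
      exact Finset.prod_nonneg fun i _ => hf.1 _
    have hSgbd : BddBelow Sg := by
      refine ⟨0, ?_⟩
      rintro x ⟨v, -, rfl⟩
      exact Finset.prod_nonneg fun i _ => hg.1 _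
    have hA0 : 0 ≤ sInf Sf := by
      apply Real.sInf_nonneg
      rintro x ⟨v, -, rfl⟩
      exact Finset.prod_nonneg fun i _ => hf.1 _
    have hB0 : 0 ≤ sInf Sg := by
      apply Real.sInf_nonneg
      rintro x ⟨v, -, rfl⟩
      exact Finset.prod_nonneg fun i _ => hg.1 _
    have prodle : ∀ v : Fin N → V,
        (∏ i, f (v i)) ≤ Real.exp (N * d) * ∏ i, g (v i) := by
      intro v
      calc (∏ i, f (v i)) ≤ ∏ i, (Real.exp d * g (v i)) :=
          Finset.prod_le_prod (fun i _ => hf.1 _) (fun i _ => key _)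
        _ = Real.exp d ^ N * ∏ i, g (v i) := by
            rw [Finset.prod_mul_distrib, Finset.prod_const, Finset.card_univ,
              Fintype.card_fin]
        _ = Real.exp (N * d) * ∏ i, g (v i) := by rw [Real.exp_nat_mul]
    have prodle' : ∀ v : Fin N → V,
        (∏ i, g (v i)) ≤ Real.exp (N * d) * ∏ i, f (v i) := by
      intro v
      calc (∏ i, g (v i)) ≤ ∏ i, (Real.exp d * f (v i)) :=
          Finset.prod_le_prod (fun i _ => hg.1 _) (fun i _ => key' _)
        _ = Real.exp d ^ N * ∏ i, f (v i) := by
            rw [Finset.prod_mul_distrib, Finset.prod_const, Finset.card_univ,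
              Fintype.card_fin]
        _ = Real.exp (N * d) * ∏ i, f (v i) := by rw [Real.exp_nat_mul]
    have hAB : sInf Sf ≤ Real.exp (N * d) * sInf Sg := by
      have h6 : sInf Sf / Real.exp (N * d) ≤ sInf Sg := by
        apply le_csInf hSgne
        rintro x ⟨v, hv, rfl⟩
        rw [div_le_iff₀ (Real.exp_pos _)]
        calc sInf Sf ≤ ∏ i, f (v i) := csInf_le hSfbd ⟨v, hv, rfl⟩
          _ ≤ Real.exp (N * d) * ∏ i, g (v i) := prodle v
          _ = (∏ i, g (v i)) * Real.exp (N * d) := mul_comm _ _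
      rw [div_le_iff₀ (Real.exp_pos _)] at h6
      linarith [h6, mul_comm (sInf Sg) (Real.exp (N * d))]
    have hBA : sInf Sg ≤ Real.exp (N * d) * sInf Sf := by
      have h6 : sInf Sg / Real.exp (N * d) ≤ sInf Sf := by
        apply le_csInf hSfne
        rintro x ⟨v, hv, rfl⟩
        rw [div_le_iff₀ (Real.exp_pos _)]
        calc sInf Sg ≤ ∏ i, g (v i) := csInf_le hSgbd ⟨v, hv, rfl⟩
          _ ≤ Real.exp (N * d) * ∏ i, f (v i) := prodle' v
          _ = (∏ i, f (v i)) * Real.exp (N * d) := mul_comm _ _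
      rw [div_le_iff₀ (Real.exp_pos _)] at h6
      linarith [h6, mul_comm (sInf Sf) (Real.exp (N * d))]
    rcases eq_or_lt_of_le hA0 with h0 | hApos
    · -- sInf Sf = 0, hence sInf Sg = 0
      have hBz : sInf Sg = 0 := by
        have := hBA
        rw [← h0, mul_zero] at this
        linarith
      rw [← h0, ← hBz]
      simpa using hNd0
    · have hBpos : 0 < sInf Sg := by
        rcases eq_or_lt_of_le hB0 with h0' | h' 
        · exfalso
          have := hAB
          rw [← h0', mul_zero] at this
          linarith
        · exact h'
      rw [abs_le]
      constructor
      · have := Real.log_le_log hBpos hBA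
        rw [Real.log_mul (Real.exp_ne_zero _) (ne_of_gt hApos), Real.log_exp] at this
        linarith
      · have := Real.log_le_log hApos hAB
        rw [Real.log_mul (Real.exp_ne_zero _) (ne_of_gt hBpos), Real.log_exp] at this
        linarith
  · -- no decomposition at all: both sets are empty
    have hSfe : Sf = ∅ := by
      rw [Set.eq_empty_iff_forall_notMem]
      rintro x ⟨v, hv, -⟩
      exact hne ⟨v, hv⟩
    have hSge : Sg = ∅ := by
      rw [Set.eq_empty_iff_forall_notMem]
      rintro x ⟨v, hv, -⟩
      exact hne ⟨v, hv⟩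
    rw [hSfe, hSge, Real.sInf_empty]
    simpa using hNd0
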